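/- arXiv:2106.11165 — 3 statements merged into one kernel-verified Lean document; each statement's English description precedes it below -/
import Mathlib

section
/- Let γ₁,γ₂∈(1,∞) with 1/γ₁ + 1/γ₂ = 1, let a,b>0 and c≥1. Then a·b < (c^{γ₁-1}/(e(γ₁-1)))·a^{γ₁} + (1/c)·b^{γ₂}. -/
/-!
Apply Young's inequality to `(t a) (b / t)` with `t ^ γ₂ = c / γ₂`, which gives
`a b ≤ (c / γ₂) ^ (γ₁ - 1) / γ₁ · a ^ γ₁ + b ^ γ₂ / c`. Comparing coefficients, the claim reduces to
`e < γ₂ ^ γ₁`, i.e. `γ₁⁻¹ < log γ₂ = -log (1 - γ₁⁻¹)`, which is the strict inequality `1 + x < eˣ`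
at `x = -γ₁⁻¹`.
-/

namespace Real

variable {p q : ℝ}

theorem HolderConjugate.exp_one_lt_rpow (hpq : p.HolderConjugate q) : exp 1 < q ^ p := by
  have hexp : exp p⁻¹ < q := by
    have h := add_one_lt_exp (neg_ne_zero.mpr hpq.inv_ne_zero)
    rw [neg_add_eq_sub, hpq.one_sub_inv, exp_neg] at h
    exact (inv_lt_inv₀ hpq.symm.pos (exp_pos _)).mp h
  calc exp 1 = exp p⁻¹ ^ p := by rw [← exp_mul, inv_mul_cancel₀ hpq.ne_zero]
    _ < q ^ p := rpow_lt_rpow (exp_pos _).le hexp hpq.pos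

theorem young_inequality_of_nonneg_weighted {a b c : ℝ} (ha : 0 ≤ a) (hb : 0 ≤ b) (hc : 0 < c)
    (hpq : p.HolderConjugate q) : a * b ≤ (c / q) ^ (p - 1) / p * a ^ p + b ^ q / c := by
  have hcq : 0 < c / q := div_pos hc hpq.symm.pos
  set t := (c / q) ^ q⁻¹ with ht
  have htpos : 0 < t := rpow_pos_of_pos hcq _
  have htq : t ^ q = c / q := by
    rw [ht, ← rpow_mul hcq.le, inv_mul_cancel₀ hpq.symm.ne_zero, rpow_one]
  have htp : t ^ p = (c / q) ^ (p - 1) := by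
    rw [ht, ← rpow_mul hcq.le, inv_mul_eq_div, hpq.div_conj_eq_sub_one]
  have hyoung := young_inequality_of_nonneg (mul_nonneg htpos.le ha) (div_nonneg hb htpos.le) hpq
  rw [mul_rpow htpos.le ha, div_rpow hb htpos.le, htp, htq] at hyoung
  calc a * b = t * a * (b / t) := by field_simp
    _ ≤ _ := hyoung
    _ = _ := by field_simp [hpq.symm.ne_zero]

theorem HolderConjugate.rpow_sub_one_div_lt {c : ℝ} (hc : 0 < c) (hpq : p.HolderConjugate q) :
    (c / q) ^ (p - 1) / p < c ^ (p - 1) / (exp 1 * (p - 1)) := by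
  have hq := hpq.symm.pos
  have hden : q ^ (p - 1) * p = q ^ p * (p - 1) := by
    nth_rw 2 [← hpq.sub_one_mul_conj]
    rw [rpow_sub_one hq.ne']
    field_simp
  rw [div_rpow hc.le hq.le, div_div, hden]
  exact div_lt_div_of_pos_left (rpow_pos_of_pos hc _) (mul_pos (exp_pos 1) hpq.sub_one_pos)
    (mul_lt_mul_of_pos_right hpq.exp_one_lt_rpow hpq.sub_one_pos)

end Real

theorem stmt_2_general (γ₁ γ₂ a b c : ℝ) (h₁ : 1 < γ₁)
    (hconj : 1 / γ₁ + 1 / γ₂ = 1) (ha : 0 < a) (hb : 0 < b) (hc : 1 ≤ c) :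
    a * b < c ^ (γ₁ - 1) / (Real.exp 1 * (γ₁ - 1)) * a ^ γ₁ + (1 / c) * b ^ γ₂ := by
  have hpq : γ₁.HolderConjugate γ₂ := Real.holderConjugate_iff.mpr ⟨h₁, by simpa using hconj⟩
  have hc₀ : 0 < c := one_pos.trans_le hc
  calc a * b ≤ (c / γ₂) ^ (γ₁ - 1) / γ₁ * a ^ γ₁ + b ^ γ₂ / c :=
        Real.young_inequality_of_nonneg_weighted ha.le hb.le hc₀ hpq
    _ < c ^ (γ₁ - 1) / (Real.exp 1 * (γ₁ - 1)) * a ^ γ₁ + (1 / c) * b ^ γ₂ := by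
        rw [one_div_mul_eq_div]
        gcongr ?_ * _ + _
        exact hpq.rpow_sub_one_div_lt hc₀

theorem stmt_2 (γ₁ γ₂ a b c : ℝ) (h₁ : 1 < γ₁) (h₂ : 1 < γ₂)
    (hconj : 1 / γ₁ + 1 / γ₂ = 1) (ha : 0 < a) (hb : 0 < b) (hc : 1 ≤ c) :
    a * b < c ^ (γ₁ - 1) / (Real.exp 1 * (γ₁ - 1)) * a ^ γ₁ + (1 / c) * b ^ γ₂ :=
  stmt_2_general γ₁ γ₂ a b c h₁ hconj ha hb hc
end

section
/- Let w:𝕋→ℝ be continuously differentiable on the unit-volume torus, let p≥2 be an even integer and q a real with p/2 < q ≤ p+1. Set A := ∫_𝕋 w^{p-2}|∂_x w|² and B := ∫_𝕋 w^{p+2}. Then ∫_𝕋 |∂_x (w^q)| ≤ q · B^{(2q-p)/(2(p+2))} · A^{1/2}. -/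
/-!
Split `|w|^(q-1) |w'| = |w|^(q-p/2) · (|w|^((p-2)/2) |w'|)`. Cauchy–Schwarz bounds the integral by
`(∫ |w|^(2q-p))^(1/2) · A^(1/2)`, and since `0 < 2q - p ≤ p + 2`, Hölder against the constant `1` on
the probability space `[0, 1]` gives `∫ |w|^(2q-p) ≤ B^((2q-p)/(p+2))`.
-/

open MeasureTheory

theorem Continuous.memLp_top_restrict_Ioc {f : ℝ → ℝ} (hf : Continuous f) (μ : Measure ℝ)
    (a b : ℝ) : MemLp f ⊤ (μ.restrict (Set.Ioc a b)) := by
  obtain ⟨C, hC⟩ := (isCompact_Icc (a := a) (b := b)).exists_bound_of_continuousOn hf.continuousOn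
  exact memLp_top_of_bound hf.aestronglyMeasurable.restrict C <|
    ae_restrict_of_forall_mem measurableSet_Ioc fun x hx => hC x (Set.Ioc_subset_Icc_self hx)

namespace MeasureTheory

variable {α : Type*} [MeasurableSpace α] {μ : Measure α}

theorem MemLp.abs_rpow {f : α → ℝ} {p : ENNReal} (hf : MemLp f p μ) {r : ℝ} (hr : 0 < r) :
    MemLp (fun x => |f x| ^ r) (p / ENNReal.ofReal r) μ := by
  simpa [ENNReal.toReal_ofReal hr.le] using hf.norm_rpow_div (ENNReal.ofReal r)

theorem MemLp.abs_rpow_of_top [IsFiniteMeasure μ] {f : α → ℝ} (hf : MemLp f ⊤ μ) {r : ℝ}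
    (hr : 0 ≤ r) (p : ENNReal) : MemLp (fun x => |f x| ^ r) p μ := by
  have := hf.norm_rpow_div (ENNReal.ofReal r)
  rw [ENNReal.toReal_ofReal hr, ENNReal.top_div_of_ne_top ENNReal.ofReal_ne_top] at this
  exact this.mono_exponent le_top

variable [IsProbabilityMeasure μ]

theorem integral_abs_rpow_le_integral_abs_rpow_rpow {f : α → ℝ} {r s : ℝ} (hr : 0 < r)
    (hrs : r ≤ s) (hf : MemLp f (ENNReal.ofReal s) μ) :
    ∫ x, |f x| ^ r ∂μ ≤ (∫ x, |f x| ^ s ∂μ) ^ (r / s) := by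
  rcases hrs.eq_or_lt with rfl | hlt
  · rw [div_self hr.ne', Real.rpow_one]
  have hfr : MemLp (fun x => |f x| ^ r) (ENNReal.ofReal (s / r)) μ := by
    rw [ENNReal.ofReal_div_of_pos hr]
    exact hf.abs_rpow hr
  have hpow : ∀ x, (|f x| ^ r) ^ (s / r) = |f x| ^ s := fun x => by
    rw [← Real.rpow_mul (abs_nonneg _), mul_div_cancel₀ _ hr.ne']
  have := integral_mul_le_Lp_mul_Lq_of_nonneg (.conjExponent ((one_lt_div hr).2 hlt))
    (ae_of_all μ fun x => by positivity) (ae_of_all μ fun _ => zero_le_one) hfr (memLp_const 1)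
  simpa only [mul_one, Real.one_rpow, integral_const, probReal_univ, smul_eq_mul, hpow,
    one_div_div] using this

theorem integral_abs_rpow_mul_abs_le {u v : α → ℝ} (hu : MemLp u ⊤ μ) (hv : MemLp v ⊤ μ)
    {a q : ℝ} (ha : 2 ≤ a) (hq₁ : a / 2 < q) (hq₂ : q ≤ a + 1) :
    ∫ x, |u x| ^ (q - 1) * |v x| ∂μ ≤
      (∫ x, |u x| ^ (a + 2) ∂μ) ^ ((2 * q - a) / (2 * (a + 2))) *
        (∫ x, |u x| ^ (a - 2) * v x ^ 2 ∂μ) ^ ((1:ℝ) / 2) := by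
  set f : α → ℝ := fun x => |u x| ^ (q - a / 2)
  set g : α → ℝ := fun x => |u x| ^ ((a - 2) / 2) * |v x|
  have hsplit : ∀ x, |u x| ^ (q - 1) * |v x| = f x * g x := fun x => by
    rw [show q - 1 = (q - a / 2) + (a - 2) / 2 by ring,
      Real.rpow_add' (abs_nonneg _) (by linarith), mul_assoc]
  have hf2 : ∀ x, f x ^ (2:ℝ) = |u x| ^ (2 * q - a) := fun x => by
    rw [← Real.rpow_mul (abs_nonneg _)]
    ring_nf
  have hg2 : ∀ x, g x ^ (2:ℝ) = |u x| ^ (a - 2) * v x ^ 2 := fun x => by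
    rw [Real.mul_rpow (by positivity) (abs_nonneg _), ← Real.rpow_mul (abs_nonneg _),
      Real.rpow_two, sq_abs]
    ring_nf
  have hf : MemLp f (ENNReal.ofReal 2) μ := hu.abs_rpow_of_top (by linarith) _
  have hg : MemLp g (ENNReal.ofReal 2) μ :=
    hv.abs.mul' (hu.abs_rpow_of_top (by linarith) (ENNReal.ofReal 2))
  have hCS := integral_mul_le_Lp_mul_Lq_of_nonneg .two_two (ae_of_all μ fun x => by positivity)
    (ae_of_all μ fun x => by positivity) hf hg
  have hmean := integral_abs_rpow_le_integral_abs_rpow_rpow (by linarith : 0 < 2 * q - a)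
    (by linarith : 2 * q - a ≤ a + 2) (hu.mono_exponent le_top)
  simp only [← hsplit, hf2, hg2] at hCS
  calc ∫ x, |u x| ^ (q - 1) * |v x| ∂μ
      ≤ (∫ x, |u x| ^ (2 * q - a) ∂μ) ^ ((1:ℝ) / 2) *
          (∫ x, |u x| ^ (a - 2) * v x ^ 2 ∂μ) ^ ((1:ℝ) / 2) := hCS
    _ ≤ ((∫ x, |u x| ^ (a + 2) ∂μ) ^ ((2 * q - a) / (a + 2))) ^ ((1:ℝ) / 2) *
          (∫ x, |u x| ^ (a - 2) * v x ^ 2 ∂μ) ^ ((1:ℝ) / 2) := by gcongr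
    _ = _ := by
      rw [← Real.rpow_mul (integral_nonneg fun x => by positivity), div_mul_div_comm, mul_one,
        mul_comm (a + 2)]

end MeasureTheory

theorem stmt_4_general (w : ℝ → ℝ) (hw : ContDiff ℝ 1 w)
    (p : ℕ) (hp : 2 ≤ p)
    (q : ℝ) (hq1 : (p:ℝ) / 2 < q) (hq2 : q ≤ (p:ℝ) + 1) :
    ∫ x in (0:ℝ)..1, q * |w x| ^ (q - 1) * |deriv w x| ≤
      q * (∫ x in (0:ℝ)..1, |w x| ^ ((p:ℝ) + 2)) ^ ((2 * q - (p:ℝ)) / (2 * ((p:ℝ) + 2))) *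
        (∫ x in (0:ℝ)..1, |w x| ^ ((p:ℝ) - 2) * (deriv w x) ^ 2) ^ ((1:ℝ) / 2) := by
  have : IsProbabilityMeasure (volume.restrict (Set.Ioc (0:ℝ) 1)) := ⟨by simp⟩
  have hq : 0 ≤ q := le_trans (by positivity) hq1.le
  simp only [intervalIntegral.integral_of_le zero_le_one, mul_assoc, integral_const_mul]
  exact mul_le_mul_of_nonneg_left (integral_abs_rpow_mul_abs_le
    (hw.continuous.memLp_top_restrict_Ioc _ 0 1)
    ((hw.continuous_deriv le_rfl).memLp_top_restrict_Ioc _ 0 1) (by exact_mod_cast hp) hq1 hq2) hq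

theorem stmt_4 (w : ℝ → ℝ) (hper : Function.Periodic w 1) (hw : ContDiff ℝ 1 w)
    (p : ℕ) (hp : 2 ≤ p) (hpeven : Even p)
    (q : ℝ) (hq1 : (p:ℝ) / 2 < q) (hq2 : q ≤ (p:ℝ) + 1) :
    ∫ x in (0:ℝ)..1, q * |w x| ^ (q - 1) * |deriv w x| ≤
      q * (∫ x in (0:ℝ)..1, |w x| ^ ((p:ℝ) + 2)) ^ ((2 * q - (p:ℝ)) / (2 * ((p:ℝ) + 2))) *
        (∫ x in (0:ℝ)..1, |w x| ^ ((p:ℝ) - 2) * (deriv w x) ^ 2) ^ ((1:ℝ) / 2) :=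
  stmt_4_general w hw p hp q hq1 hq2
end

section
/- Let p≥2 be an even integer and let w:𝕋→ℝ be continuously differentiable with spatial mean m := ∫_𝕋 w. Let ρ:𝕋→ℝ be twice continuously differentiable with -∂_{xx}ρ = w - m. Then ∫_𝕋 (∂_x ρ)·w^p·(∂_x w) dx = (1/(p+1))·( ∫_𝕋 w^{p+2} - m·∫_𝕋 w^{p+1} ). -/
/-! Integrate by parts against the periodic primitive `w ^ (p + 1) / (p + 1)` of `w ^ p * w'`:
the boundary terms cancel by periodicity, and `ρ'' = m - w` turns the remaining integral into the
two moments of `w`. -/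

open MeasureTheory Function

theorem Function.Periodic.deriv {f : ℝ → ℝ} {T : ℝ} (hf : Periodic f T) :
    Periodic (deriv f) T := fun x => by
  rw [← deriv_comp_add_const, funext hf]

theorem Function.Periodic.integral_mul_deriv_eq_neg_deriv_mul {u v u' v' : ℝ → ℝ} {T : ℝ}
    (hu : Periodic u T) (hv : Periodic v T) (a : ℝ)
    (hu' : ∀ x, HasDerivAt u (u' x) x) (hv' : ∀ x, HasDerivAt v (v' x) x)
    (hu'i : IntervalIntegrable u' volume a (a + T)) (hv'i : IntervalIntegrable v' volume a (a + T)) :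
    ∫ x in a..a + T, u x * v' x = -∫ x in a..a + T, u' x * v x := by
  rw [intervalIntegral.integral_mul_deriv_eq_deriv_mul (fun x _ => hu' x) (fun x _ => hv' x)
    hu'i hv'i, hu a, hv a]
  ring

theorem HasDerivAt.pow_succ_div_succ {f : ℝ → ℝ} {f' x : ℝ} (hf : HasDerivAt f f' x) (n : ℕ) :
    HasDerivAt (fun y => f y ^ (n + 1) / (n + 1)) (f x ^ n * f') x := by
  refine ((hf.fun_pow (n + 1)).div_const ((n : ℝ) + 1)).congr_deriv ?_
  rw [Nat.add_sub_cancel, Nat.cast_succ, mul_assoc, mul_div_cancel_left₀ _ n.cast_add_one_ne_zero]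

theorem stmt_5_general (p : ℕ) (w ρ : ℝ → ℝ) (hwper : Function.Periodic w 1) (hw : ContDiff ℝ 1 w)
    (hρper : Function.Periodic ρ 1) (hρ : ContDiff ℝ 2 ρ)
    (m : ℝ) (hpoisson : ∀ x, - deriv (deriv ρ) x = w x - m) :
    ∫ x in (0:ℝ)..1, deriv ρ x * w x ^ p * deriv w x =
      (1 / ((p:ℝ) + 1)) *
        ((∫ x in (0:ℝ)..1, w x ^ (p + 2)) - m * ∫ x in (0:ℝ)..1, w x ^ (p + 1)) := by
  have hwc : Continuous w := hw.continuous
  have hρ_deriv2 : ∀ x, HasDerivAt (deriv ρ) (m - w x) x := fun x => by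
    rw [show m - w x = deriv (deriv ρ) x by linarith [hpoisson x]]
    exact (hρ.differentiable_deriv_two x).hasDerivAt
  have hpow : ∀ x, HasDerivAt (fun y => w y ^ (p + 1) / (p + 1)) (w x ^ p * deriv w x) x :=
    fun x => (hw.differentiable one_ne_zero x).hasDerivAt.pow_succ_div_succ p
  have parts := hρper.deriv.integral_mul_deriv_eq_neg_deriv_mul
    (fun x => by simp only [hwper x]) 0 hρ_deriv2 hpow
    ((continuous_const.sub hwc).intervalIntegrable _ _)
    (((hwc.pow p).mul (hw.continuous_deriv le_rfl)).intervalIntegrable _ _)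
  rw [zero_add] at parts
  calc ∫ x in (0:ℝ)..1, deriv ρ x * w x ^ p * deriv w x
      = ∫ x in (0:ℝ)..1, deriv ρ x * (w x ^ p * deriv w x) := by simp_rw [mul_assoc]
    _ = -∫ x in (0:ℝ)..1, (m - w x) * (w x ^ (p + 1) / (p + 1)) := parts
    _ = (1 / ((p:ℝ) + 1)) * ∫ x in (0:ℝ)..1, (w x ^ (p + 2) - m * w x ^ (p + 1)) := by
      rw [← intervalIntegral.integral_neg, ← intervalIntegral.integral_const_mul]
      congr 1 with x
      ring
    _ = _ := by
      rw [intervalIntegral.integral_sub (f := fun x => w x ^ (p + 2))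
        (g := fun x => m * w x ^ (p + 1)) ((hwc.pow _).intervalIntegrable _ _)
        ((continuous_const.mul (hwc.pow _)).intervalIntegrable _ _),
        intervalIntegral.integral_const_mul]

theorem stmt_5 (p : ℕ) (hp : 2 ≤ p) (hpeven : Even p)
    (w ρ : ℝ → ℝ) (hwper : Function.Periodic w 1) (hw : ContDiff ℝ 1 w)
    (hρper : Function.Periodic ρ 1) (hρ : ContDiff ℝ 2 ρ)
    (m : ℝ) (hm : m = ∫ x in (0:ℝ)..1, w x)
    (hpoisson : ∀ x, - deriv (deriv ρ) x = w x - m) :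
    ∫ x in (0:ℝ)..1, deriv ρ x * w x ^ p * deriv w x =
      (1 / ((p:ℝ) + 1)) *
        ((∫ x in (0:ℝ)..1, w x ^ (p + 2)) - m * ∫ x in (0:ℝ)..1, w x ^ (p + 1)) :=
  stmt_5_general p w ρ hwper hw hρper hρ m hpoisson
end
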